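/- arXiv:1609.09584 — 3 statements merged into one kernel-verified Lean document; each statement's English description precedes it below -/
import Mathlib

section
/- Tsirelson's bound: for Hermitian unitary operators A₀, A₁ on H_A and B₀, B₁ on H_B, the operator norm of A₀⊗B₀ + A₁⊗B₀ + A₀⊗B₁ - A₁⊗B₁ on H_A ⊗ H_B is at most 2√2. -/
open Matrix Kronecker

set_option maxHeartbeats 1000000

lemma sub_kron {a b : ℕ} (A B : Matrix (Fin a) (Fin a) ℂ) (C : Matrix (Fin b) (Fin b) ℂ) :
    (A - B) ⊗ₖ C = A ⊗ₖ C - B ⊗ₖ C := by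
  ext ⟨i, j⟩ ⟨k, l⟩; simp [sub_mul]

lemma kron_sub {a b : ℕ} (A : Matrix (Fin a) (Fin a) ℂ) (B C : Matrix (Fin b) (Fin b) ℂ) :
    A ⊗ₖ (B - C) = A ⊗ₖ B - A ⊗ₖ C := by
  ext ⟨i, j⟩ ⟨k, l⟩; simp [mul_sub]

lemma kron_conjTranspose {a b : ℕ} (A : Matrix (Fin a) (Fin a) ℂ)
    (B : Matrix (Fin b) (Fin b) ℂ) : (A ⊗ₖ B)ᴴ = Aᴴ ⊗ₖ Bᴴ := by
  ext ⟨i, j⟩ ⟨k, l⟩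
  simp [conjTranspose_apply, mul_comm]

lemma clm_norm_le_one_of_unitary {n : Type*} [Fintype n] [DecidableEq n] (M : Matrix n n ℂ)
    (h : Mᴴ * M = 1) : ‖Matrix.toEuclideanCLM (𝕜 := ℂ) M‖ ≤ 1 := by
  set T := Matrix.toEuclideanCLM (𝕜 := ℂ) M with hT
  have h1 : star T * T = 1 := by
    rw [hT, ← map_star, ← _root_.map_mul, Matrix.star_eq_conjTranspose, h, _root_.map_one]
  have h2 : ‖T‖ * ‖T‖ = ‖star T * T‖ := (CStarRing.norm_star_mul_self).symm
  have h3 : ‖(1 : EuclideanSpace ℂ n →L[ℂ] EuclideanSpace ℂ n)‖ ≤ 1 := by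
    rw [ContinuousLinearMap.one_def]
    exact ContinuousLinearMap.norm_id_le
  rw [h1] at h2
  nlinarith [norm_nonneg T]

theorem tsirelson_bound {a b : ℕ}
    (A₀ A₁ : Matrix (Fin a) (Fin a) ℂ) (B₀ B₁ : Matrix (Fin b) (Fin b) ℂ)
    (hA₀ : A₀.IsHermitian) (hA₁ : A₁.IsHermitian)
    (hB₀ : B₀.IsHermitian) (hB₁ : B₁.IsHermitian)
    (hA₀u : A₀ * A₀ = 1) (hA₁u : A₁ * A₁ = 1)
    (hB₀u : B₀ * B₀ = 1) (hB₁u : B₁ * B₁ = 1) :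
    ‖Matrix.toEuclideanCLM (𝕜 := ℂ)
        (A₀ ⊗ₖ B₀ + A₁ ⊗ₖ B₀ + A₀ ⊗ₖ B₁ - A₁ ⊗ₖ B₁)‖ ≤ 2 * Real.sqrt 2 := by
  set C : Matrix (Fin a × Fin b) (Fin a × Fin b) ℂ :=
    A₀ ⊗ₖ B₀ + A₁ ⊗ₖ B₀ + A₀ ⊗ₖ B₁ - A₁ ⊗ₖ B₁ with hC
  set X : Matrix (Fin a) (Fin a) ℂ := A₀ * A₁ - A₁ * A₀ with hX
  set Y : Matrix (Fin b) (Fin b) ℂ := B₁ * B₀ - B₀ * B₁ with hY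
  have key : C * C = (4 : ℂ) • (1 : Matrix (Fin a × Fin b) (Fin a × Fin b) ℂ) + X ⊗ₖ Y := by
    rw [hC, hX, hY, ← Matrix.one_kronecker_one (α := ℂ) (m := Fin a) (n := Fin b)]
    simp only [Matrix.add_kronecker, Matrix.kronecker_add, sub_kron,
      kron_sub, add_mul, mul_add, sub_mul, mul_sub,
      ← Matrix.mul_kronecker_mul, hA₀u, hA₁u, hB₀u, hB₁u, smul_add, smul_sub]
    module
  have hCherm : Cᴴ = C := by
    rw [hC]
    simp only [conjTranspose_add, conjTranspose_sub, kron_conjTranspose,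
      hA₀.eq, hA₁.eq, hB₀.eq, hB₁.eq]
  set T := Matrix.toEuclideanCLM (𝕜 := ℂ) C with hT
  have hstar : star T = T := by
    rw [hT, ← map_star, Matrix.star_eq_conjTranspose, hCherm]
  -- norm bounds for the two commutator-ish factors
  have hu1 : ‖Matrix.toEuclideanCLM (𝕜 := ℂ) ((A₀ * A₁) ⊗ₖ (1 : Matrix (Fin b) (Fin b) ℂ))‖ ≤ 1 := by
    apply clm_norm_le_one_of_unitary
    rw [kron_conjTranspose, conjTranspose_mul, hA₀.eq, hA₁.eq, conjTranspose_one,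
      ← Matrix.mul_kronecker_mul, one_mul, mul_assoc A₁, ← mul_assoc A₀, hA₀u, one_mul,
      hA₁u, Matrix.one_kronecker_one]
  have hu2 : ‖Matrix.toEuclideanCLM (𝕜 := ℂ) ((A₁ * A₀) ⊗ₖ (1 : Matrix (Fin b) (Fin b) ℂ))‖ ≤ 1 := by
    apply clm_norm_le_one_of_unitary
    rw [kron_conjTranspose, conjTranspose_mul, hA₀.eq, hA₁.eq, conjTranspose_one,
      ← Matrix.mul_kronecker_mul, one_mul, mul_assoc A₀, ← mul_assoc A₁, hA₁u, one_mul,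
      hA₀u, Matrix.one_kronecker_one]
  have hv1 : ‖Matrix.toEuclideanCLM (𝕜 := ℂ) ((1 : Matrix (Fin a) (Fin a) ℂ) ⊗ₖ (B₁ * B₀))‖ ≤ 1 := by
    apply clm_norm_le_one_of_unitary
    rw [kron_conjTranspose, conjTranspose_mul, hB₀.eq, hB₁.eq, conjTranspose_one,
      ← Matrix.mul_kronecker_mul, one_mul, mul_assoc B₀, ← mul_assoc B₁, hB₁u, one_mul,
      hB₀u, Matrix.one_kronecker_one]
  have hv2 : ‖Matrix.toEuclideanCLM (𝕜 := ℂ) ((1 : Matrix (Fin a) (Fin a) ℂ) ⊗ₖ (B₀ * B₁))‖ ≤ 1 := by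
    apply clm_norm_le_one_of_unitary
    rw [kron_conjTranspose, conjTranspose_mul, hB₀.eq, hB₁.eq, conjTranspose_one,
      ← Matrix.mul_kronecker_mul, one_mul, mul_assoc B₁, ← mul_assoc B₀, hB₀u, one_mul,
      hB₁u, Matrix.one_kronecker_one]
  have hXk : ‖Matrix.toEuclideanCLM (𝕜 := ℂ) (X ⊗ₖ (1 : Matrix (Fin b) (Fin b) ℂ))‖ ≤ 2 := by
    rw [hX, sub_kron, map_sub]
    calc _ ≤ ‖Matrix.toEuclideanCLM (𝕜 := ℂ) ((A₀ * A₁) ⊗ₖ (1 : Matrix (Fin b) (Fin b) ℂ))‖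
            + ‖Matrix.toEuclideanCLM (𝕜 := ℂ) ((A₁ * A₀) ⊗ₖ (1 : Matrix (Fin b) (Fin b) ℂ))‖ :=
          norm_sub_le _ _
      _ ≤ 2 := by linarith
  have hYk : ‖Matrix.toEuclideanCLM (𝕜 := ℂ) ((1 : Matrix (Fin a) (Fin a) ℂ) ⊗ₖ Y)‖ ≤ 2 := by
    rw [hY, kron_sub, map_sub]
    calc _ ≤ ‖Matrix.toEuclideanCLM (𝕜 := ℂ) ((1 : Matrix (Fin a) (Fin a) ℂ) ⊗ₖ (B₁ * B₀))‖
            + ‖Matrix.toEuclideanCLM (𝕜 := ℂ) ((1 : Matrix (Fin a) (Fin a) ℂ) ⊗ₖ (B₀ * B₁))‖ :=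
          norm_sub_le _ _
      _ ≤ 2 := by linarith
  have hK : ‖Matrix.toEuclideanCLM (𝕜 := ℂ) (X ⊗ₖ Y)‖ ≤ 4 := by
    have hfac : X ⊗ₖ Y = (X ⊗ₖ (1 : Matrix (Fin b) (Fin b) ℂ)) *
        ((1 : Matrix (Fin a) (Fin a) ℂ) ⊗ₖ Y) := by
      rw [← Matrix.mul_kronecker_mul, mul_one, one_mul]
    rw [hfac, _root_.map_mul]
    calc ‖_ * _‖ ≤ _ * _ := norm_mul_le _ _
      _ ≤ 2 * 2 := by
          apply mul_le_mul hXk hYk (norm_nonneg _) (by norm_num)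
      _ = 4 := by norm_num
  have hone : ‖(1 : EuclideanSpace ℂ (Fin a × Fin b) →L[ℂ] EuclideanSpace ℂ (Fin a × Fin b))‖ ≤ 1 := by
    rw [ContinuousLinearMap.one_def]; exact ContinuousLinearMap.norm_id_le
  have hTT : ‖T‖ * ‖T‖ ≤ 8 := by
    have h2 : ‖T‖ * ‖T‖ = ‖T * T‖ := by
      rw [← CStarRing.norm_star_mul_self, hstar]
    rw [h2, hT, ← _root_.map_mul, key, map_add, _root_.map_smul, _root_.map_one]
    calc ‖_ + _‖ ≤ ‖(4 : ℂ) • (1 : EuclideanSpace ℂ (Fin a × Fin b) →L[ℂ] EuclideanSpace ℂ (Fin a × Fin b))‖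
        + ‖Matrix.toEuclideanCLM (𝕜 := ℂ) (X ⊗ₖ Y)‖ := norm_add_le _ _
      _ ≤ 4 + 4 := by
          apply add_le_add _ hK
          have h4 : ‖(4 : ℂ) • (1 : EuclideanSpace ℂ (Fin a × Fin b) →L[ℂ] EuclideanSpace ℂ (Fin a × Fin b))‖
              = ‖(4 : ℂ)‖ * ‖(1 : EuclideanSpace ℂ (Fin a × Fin b) →L[ℂ] EuclideanSpace ℂ (Fin a × Fin b))‖ :=
            norm_smul (4 : ℂ) (1 : EuclideanSpace ℂ (Fin a × Fin b) →L[ℂ] EuclideanSpace ℂ (Fin a × Fin b))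
          rw [h4, Complex.norm_ofNat]
          nlinarith [hone]
      _ = 8 := by norm_num
  nlinarith [Real.sq_sqrt (show (0:ℝ) ≤ 2 by norm_num),
    Real.sqrt_nonneg 2, norm_nonneg T, hTT]
end

section
/- For Hermitian unitary operators A₀, A₁, B₀, B₁ as in the CHSH setting, the square of the CHSH operator S = A₀⊗B₀ + A₁⊗B₀ + A₀⊗B₁ - A₁⊗B₁ satisfies S² = 4·I - [A₀, A₁]⊗[B₀, B₁], where [X,Y] = XY - YX. -/
open Matrix Kronecker


private theorem sub_kron_s4 {l m n p : Type*} (A B : Matrix l m ℂ) (C : Matrix n p ℂ) :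
    (A - B) ⊗ₖ C = A ⊗ₖ C - B ⊗ₖ C := by
  ext ⟨i,j⟩ ⟨k,r⟩; simp [Matrix.kroneckerMap, sub_mul]

private theorem kron_sub_s4 {l m n p : Type*} (A : Matrix l m ℂ) (B C : Matrix n p ℂ) :
    A ⊗ₖ (B - C) = A ⊗ₖ B - A ⊗ₖ C := by
  ext ⟨i,j⟩ ⟨k,r⟩; simp [Matrix.kroneckerMap, mul_sub]

theorem chsh_operator_squared {a b : ℕ}
    (A₀ A₁ : Matrix (Fin a) (Fin a) ℂ) (B₀ B₁ : Matrix (Fin b) (Fin b) ℂ)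
    (hA₀ : A₀.IsHermitian) (hA₁ : A₁.IsHermitian)
    (hB₀ : B₀.IsHermitian) (hB₁ : B₁.IsHermitian)
    (hA₀u : A₀ * A₀ = 1) (hA₁u : A₁ * A₁ = 1)
    (hB₀u : B₀ * B₀ = 1) (hB₁u : B₁ * B₁ = 1) :
    (A₀ ⊗ₖ B₀ + A₁ ⊗ₖ B₀ + A₀ ⊗ₖ B₁ - A₁ ⊗ₖ B₁) *
      (A₀ ⊗ₖ B₀ + A₁ ⊗ₖ B₀ + A₀ ⊗ₖ B₁ - A₁ ⊗ₖ B₁)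
      = (4 : ℂ) • (1 : Matrix (Fin a × Fin b) (Fin a × Fin b) ℂ)
        - (A₀ * A₁ - A₁ * A₀) ⊗ₖ (B₀ * B₁ - B₁ * B₀) := by
  have h1 : (1 : Matrix (Fin a × Fin b) (Fin a × Fin b) ℂ) = (1 : Matrix (Fin a) (Fin a) ℂ) ⊗ₖ (1 : Matrix (Fin b) (Fin b) ℂ) := (Matrix.one_kronecker_one).symm
  simp only [sub_mul, mul_sub, add_mul, mul_add, ← Matrix.mul_kronecker_mul,
    hA₀u, hA₁u, hB₀u, hB₁u, sub_kron_s4, kron_sub_s4, Matrix.add_kronecker, Matrix.kronecker_add]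
  rw [h1]
  module
end

section
/- If B₀, B₁ are Hermitian unitary operators on a finite-dimensional Hilbert space such that B₀ + B₁ and B₀ - B₁ are both invertible, then X' = (B₀+B₁)|B₀+B₁|⁻¹ and Z' = (B₀-B₁)|B₀-B₁|⁻¹ are Hermitian unitary and anticommute: X'Z' + Z'X' = 0, where |M| = √(M†M). -/
open Matrix
open scoped ComplexOrder

/-- The positive semidefinite square root of a positive semidefinite matrix
(the definition `Matrix.PosSemidef.sqrt` of the older Mathlib, removed since). -/
noncomputable def Matrix.PosSemidef.sqrt {n 𝕜 : Type*} [Fintype n] [RCLike 𝕜] [DecidableEq n]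
    {A : Matrix n n 𝕜} (hA : A.PosSemidef) : Matrix n n 𝕜 :=
  hA.1.eigenvectorUnitary.1 * diagonal ((↑) ∘ (√·) ∘ hA.1.eigenvalues) *
  (star hA.1.eigenvectorUnitary : Matrix n n 𝕜)

/-! Since `B₀² = B₁²`, the matrices `S = B₀ + B₁` and `D = B₀ - B₁` anticommute. Hence `D`
commutes with `S² = |S|²`, so with `|S|`, and likewise `S` commutes with `|D|`, after which
`|S|` and `|D|` commute with each other. The polar parts `S |S|⁻¹` and `D |D|⁻¹` then inherit
the anticommutation of `S` and `D`, while `(S |S|⁻¹)² = S² |S|⁻² = 1`. -/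

section Ring

variable {R : Type*} [Ring R] {a b x y : R}

theorem add_mul_sub_eq_neg_sub_mul_add_of_mul_self_eq (h : a * a = b * b) :
    (a + b) * (a - b) = -((a - b) * (a + b)) := by
  rw [eq_neg_iff_add_eq_zero]
  calc (a + b) * (a - b) + (a - b) * (a + b) = 2 * (a * a - b * b) := by noncomm_ring
    _ = 0 := by rw [h, sub_self, mul_zero]

theorem commute_mul_self_of_mul_eq_neg (h : x * y = -(y * x)) : Commute x (y * y) :=
  calc x * (y * y) = x * y * y := (mul_assoc _ _ _).symm
    _ = -(y * x) * y := by rw [h]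
    _ = -(y * -(y * x)) := by rw [neg_mul, mul_assoc, ← h]
    _ = y * y * x := by rw [mul_neg, neg_neg, mul_assoc]

theorem mul_mul_add_mul_mul_eq_zero {p q : R} (h : x * y + y * x = 0) (hpy : Commute p y)
    (hqx : Commute q x) (hpq : Commute p q) : x * p * (y * q) + y * q * (x * p) = 0 := by
  rw [hpy.mul_mul_mul_comm, hqx.mul_mul_mul_comm, ← hpq.eq, ← add_mul, h, zero_mul]

end Ring

namespace Matrix

section NonsingInv

variable {n α : Type*} [Fintype n] [DecidableEq n] [CommRing α] {A B : Matrix n n α}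

theorem commute_nonsing_inv_right (h : Commute A B) : Commute A B⁻¹ := by
  by_cases hB : IsUnit B
  · obtain ⟨u, rfl⟩ := hB
    rw [nonsing_inv_eq_ringInverse, Ring.inverse_unit]
    exact h.units_inv_right
  · rw [nonsing_inv_eq_ringInverse, Ring.inverse_non_unit _ hB]
    exact Commute.zero_right A

theorem mul_nonsing_inv_mul_self_eq_one (hAB : Commute A B) (hB : IsUnit B)
    (hBB : B * B = A * A) : A * B⁻¹ * (A * B⁻¹) = 1 := by
  have hBdet : IsUnit (B * B).det := (isUnit_iff_isUnit_det _).mp (hB.mul hB)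
  calc A * B⁻¹ * (A * B⁻¹) = A * A * (B⁻¹ * B⁻¹) :=
        (commute_nonsing_inv_right hAB).symm.mul_mul_mul_comm A B⁻¹
    _ = 1 := by rw [← hBB, ← mul_inv_rev, mul_nonsing_inv _ hBdet]

theorem IsHermitian.mul_nonsing_inv [StarRing α] (hA : A.IsHermitian) (hB : B.IsHermitian)
    (hAB : Commute A B) : (A * B⁻¹).IsHermitian := by
  rw [IsHermitian, conjTranspose_mul, conjTranspose_nonsing_inv, hA.eq, hB.eq]
  exact (commute_nonsing_inv_right hAB).symm.eq

end NonsingInv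

section Sqrt

open scoped MatrixOrder

variable {n 𝕜 : Type*} [Fintype n] [DecidableEq n] [RCLike 𝕜] {A B S : Matrix n n 𝕜}

theorem PosSemidef.sqrt_eq_cfcSqrt (hA : A.PosSemidef) : hA.sqrt = CFC.sqrt A := by
  rw [CFC.sqrt_eq_cfc, cfc_nnreal_eq_real _ A, hA.1.cfc_eq]
  simp only [IsHermitian.cfc, PosSemidef.sqrt, Unitary.conjStarAlgAut_apply]
  congr 3
  funext i
  simp [Real.coe_sqrt, Real.coe_toNNReal', hA.eigenvalues_nonneg i]

theorem PosSemidef.isHermitian_sqrt (hA : A.PosSemidef) : hA.sqrt.IsHermitian := by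
  rw [hA.sqrt_eq_cfcSqrt]
  exact (CFC.sqrt_nonneg A).posSemidef.isHermitian

theorem PosSemidef.sqrt_mul_self (hA : A.PosSemidef) : hA.sqrt * hA.sqrt = A := by
  rw [hA.sqrt_eq_cfcSqrt]
  exact CFC.sqrt_mul_sqrt_self A hA.nonneg

theorem PosSemidef.commute_sqrt (hA : A.PosSemidef) (h : Commute B A) : Commute B hA.sqrt := by
  rw [hA.sqrt_eq_cfcSqrt, CFC.sqrt_eq_cfc]
  exact (h.symm.cfc_nnreal _).symm

theorem IsHermitian.commute_sqrt_conjTranspose_mul_self (hS : S.IsHermitian)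
    (h : Commute B S) : Commute B (posSemidef_conjTranspose_mul_self S).sqrt :=
  PosSemidef.commute_sqrt _ (by rw [hS.eq]; exact h.mul_right h)

theorem isUnit_sqrt_conjTranspose_mul_self (hS : IsUnit S) :
    IsUnit (posSemidef_conjTranspose_mul_self S).sqrt := by
  have h := (posSemidef_conjTranspose_mul_self S).sqrt_mul_self
  exact isUnit_of_mul_isUnit_left (h ▸ hS.star.mul hS)

theorem IsHermitian.isHermitian_mul_inv_sqrt_conjTranspose_mul_self (hS : S.IsHermitian) :
    (S * (posSemidef_conjTranspose_mul_self S).sqrt⁻¹).IsHermitian :=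
  hS.mul_nonsing_inv (PosSemidef.isHermitian_sqrt _)
    (hS.commute_sqrt_conjTranspose_mul_self (Commute.refl S))

theorem IsHermitian.mul_inv_sqrt_conjTranspose_mul_self_mul_self (hS : S.IsHermitian)
    (hSu : IsUnit S) :
    S * (posSemidef_conjTranspose_mul_self S).sqrt⁻¹ *
      (S * (posSemidef_conjTranspose_mul_self S).sqrt⁻¹) = 1 := by
  refine mul_nonsing_inv_mul_self_eq_one (hS.commute_sqrt_conjTranspose_mul_self (.refl S))
    (isUnit_sqrt_conjTranspose_mul_self hSu) ?_
  rw [PosSemidef.sqrt_mul_self, hS.eq]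

end Sqrt

end Matrix

theorem bob_operators_anticommute {d : ℕ}
    (B₀ B₁ : Matrix (Fin d) (Fin d) ℂ)
    (hB₀ : B₀.IsHermitian) (hB₁ : B₁.IsHermitian)
    (hB₀u : B₀ * B₀ = 1) (hB₁u : B₁ * B₁ = 1)
    (hsum : IsUnit (B₀ + B₁)) (hdiff : IsUnit (B₀ - B₁)) :
    let absSum := (Matrix.posSemidef_conjTranspose_mul_self (B₀ + B₁)).sqrt
    let absDiff := (Matrix.posSemidef_conjTranspose_mul_self (B₀ - B₁)).sqrt
    let X' := (B₀ + B₁) * absSum⁻¹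
    let Z' := (B₀ - B₁) * absDiff⁻¹
    X'.IsHermitian ∧ X' * X' = 1 ∧ Z'.IsHermitian ∧ Z' * Z' = 1 ∧
      X' * Z' + Z' * X' = 0 := by
  intro absSum absDiff X' Z'
  have hS := hB₀.add hB₁
  have hD := hB₀.sub hB₁
  have hSD := add_mul_sub_eq_neg_sub_mul_add_of_mul_self_eq (hB₀u.trans hB₁u.symm)
  have hDS : (B₀ - B₁) * (B₀ + B₁) = -((B₀ + B₁) * (B₀ - B₁)) := by rw [hSD, neg_neg]
  have hD_absSum : Commute (B₀ - B₁) absSum :=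
    PosSemidef.commute_sqrt _ (by rw [hS.eq]; exact commute_mul_self_of_mul_eq_neg hDS)
  have hS_absDiff : Commute (B₀ + B₁) absDiff :=
    PosSemidef.commute_sqrt _ (by rw [hD.eq]; exact commute_mul_self_of_mul_eq_neg hSD)
  have habs : Commute absDiff absSum :=
    hS.commute_sqrt_conjTranspose_mul_self hS_absDiff.symm
  refine ⟨hS.isHermitian_mul_inv_sqrt_conjTranspose_mul_self,
    hS.mul_inv_sqrt_conjTranspose_mul_self_mul_self hsum,
    hD.isHermitian_mul_inv_sqrt_conjTranspose_mul_self,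
    hD.mul_inv_sqrt_conjTranspose_mul_self_mul_self hdiff, ?_⟩
  refine mul_mul_add_mul_mul_eq_zero (by rw [hSD, neg_add_cancel]) ?_ ?_ ?_
  · exact (commute_nonsing_inv_right hD_absSum).symm
  · exact (commute_nonsing_inv_right hS_absDiff).symm
  · exact commute_nonsing_inv_right (commute_nonsing_inv_right habs).symm
end
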